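/- A two-qubit state σ belongs to ACVENN if and only if S(σ) ≥ 1; that is, the conditional von Neumann entropy of UσU† is non-negative for every 4×4 unitary U if and only if the von Neumann entropy of σ is at least 1. -/

import Mathlib

open Matrix Finset
open scoped Kronecker ComplexOrder Classical

noncomputable section

/-- A quantum state: positive semidefinite matrix of trace 1. -/
def IsState {n : ℕ} (ρ : Matrix (Fin n) (Fin n) ℂ) : Prop :=
  ρ.PosSemidef ∧ ρ.trace = 1

/-- Von Neumann entropy `S(ρ) = -∑ᵢ λᵢ log₂ λᵢ` over the eigenvalues of `ρ`
(with the convention `0 · log₂ 0 = 0`, which holds since `Real.logb 2 0 = 0`). -/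
noncomputable def vnEntropy {n : ℕ} (ρ : Matrix (Fin n) (Fin n) ℂ) : ℝ :=
  if h : ρ.IsHermitian then -∑ i, h.eigenvalues i * Real.logb 2 (h.eigenvalues i) else 0

/-- Reduced state `ρ_A`: partial trace over the second tensor factor,
using the ordered product basis `|00⟩,|01⟩,|10⟩,|11⟩`, i.e. `|ab⟩ ↦ 2a+b`. -/
def ptraceB (ρ : Matrix (Fin 4) (Fin 4) ℂ) : Matrix (Fin 2) (Fin 2) ℂ :=
  Matrix.of fun i j => ∑ k : Fin 2,
    ρ ⟨2 * i.val + k.val, by omega⟩ ⟨2 * j.val + k.val, by omega⟩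

/-- Reduced state `ρ_B`: partial trace over the first tensor factor. -/
def ptraceA (ρ : Matrix (Fin 4) (Fin 4) ℂ) : Matrix (Fin 2) (Fin 2) ℂ :=
  Matrix.of fun i j => ∑ k : Fin 2,
    ρ ⟨2 * k.val + i.val, by omega⟩ ⟨2 * k.val + j.val, by omega⟩

/-- Conditional von Neumann entropy `S(A|B) = S(ρ_AB) - S(ρ_A)`. -/
def condEntropy (ρ : Matrix (Fin 4) (Fin 4) ℂ) : ℝ :=
  vnEntropy ρ - vnEntropy (ptraceB ρ)

/-- Rank-one projector `|v⟩⟨v|`. -/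
def proj (v : Fin 4 → ℂ) : Matrix (Fin 4) (Fin 4) ℂ := Matrix.vecMulVec v (star v)

/-- The Bell basis `|φ⁺⟩, |φ⁻⟩, |ψ⁺⟩, |ψ⁻⟩`. -/
noncomputable def bell : Fin 4 → Fin 4 → ℂ :=
  ![![(Real.sqrt 2 : ℂ)⁻¹, 0, 0, (Real.sqrt 2 : ℂ)⁻¹],
    ![(Real.sqrt 2 : ℂ)⁻¹, 0, 0, -(Real.sqrt 2 : ℂ)⁻¹],
    ![0, (Real.sqrt 2 : ℂ)⁻¹, (Real.sqrt 2 : ℂ)⁻¹, 0],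
    ![0, (Real.sqrt 2 : ℂ)⁻¹, -(Real.sqrt 2 : ℂ)⁻¹, 0]]

/-- Kronecker product of two one-qubit matrices as a `4 × 4` matrix,
with the index identification `(a,b) ↦ 2a+b`. -/
def kron (A B : Matrix (Fin 2) (Fin 2) ℂ) : Matrix (Fin 4) (Fin 4) ℂ :=
  Matrix.reindex finProdFinEquiv finProdFinEquiv (A ⊗ₖ B)

/-! Conjugating by a unitary does not change `S(σ)`, so the condition reads `S(σ) ≥ S(ρ_A)` for all
states `ρ` unitarily equivalent to `σ`. A qubit state has entropy at most `1` (Jensen for the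
concave `x ↦ -x log x`), which gives sufficiency. Conversely, the unitary sending the eigenbasis of
`σ` to the Bell basis makes `σ` Bell-diagonal, and every Bell-diagonal state has the maximally mixed
marginal `𝟙/2`, of entropy exactly `1`. -/

open Real

section Entropy

variable {n : ℕ}

lemma vnEntropy_eq_sum_negMulLog {ρ : Matrix (Fin n) (Fin n) ℂ} (hρ : ρ.IsHermitian) :
    vnEntropy ρ = (∑ i, negMulLog (hρ.eigenvalues i)) / log 2 := by
  simp only [vnEntropy, dif_pos hρ, negMulLog, logb, Finset.sum_div, ← Finset.sum_neg_distrib]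
  exact Finset.sum_congr rfl fun i _ => by ring

lemma vnEntropy_unitary_conj {ρ U : Matrix (Fin n) (Fin n) ℂ} (hρ : ρ.IsHermitian)
    (hU : U ∈ unitaryGroup (Fin n) ℂ) : vnEntropy (U * ρ * Uᴴ) = vnEntropy ρ := by
  have hUρU : (U * ρ * Uᴴ).IsHermitian := isHermitian_mul_mul_conjTranspose U hρ
  have hUU : Uᴴ * U = 1 := mem_unitaryGroup_iff'.mp hU
  have heig : hUρU.eigenvalues = hρ.eigenvalues := by
    rw [IsHermitian.eigenvalues_eq_eigenvalues_iff, charpoly_mul_comm, ← Matrix.mul_assoc, hUU,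
      Matrix.one_mul]
  simp only [vnEntropy, dif_pos hρ, dif_pos hUρU, heig]

lemma Matrix.IsHermitian.eigenvalues_ofReal_smul_one {c : ℝ}
    (h : ((c : ℂ) • (1 : Matrix (Fin n) (Fin n) ℂ)).IsHermitian) (i : Fin n) :
    h.eigenvalues i = c := by
  have hv := h.mulVec_eigenvectorBasis i
  have hne : (h.eigenvectorBasis i : Fin n → ℂ) ≠ 0 :=
    (WithLp.ofLp_eq_zero 2).ne.2 (h.eigenvectorBasis.orthonormal.ne_zero i)
  rw [smul_mulVec, one_mulVec, ← Complex.coe_smul] at hv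
  exact_mod_cast (smul_left_injective ℂ hne hv).symm

lemma vnEntropy_maximallyMixed (hn : 0 < n) :
    vnEntropy ((n : ℂ)⁻¹ • (1 : Matrix (Fin n) (Fin n) ℂ)) = logb 2 n := by
  have h : (((n : ℝ)⁻¹ : ℝ) : ℂ) • (1 : Matrix (Fin n) (Fin n) ℂ) = (n : ℂ)⁻¹ • 1 := by
    push_cast; rfl
  have hH : ((((n : ℝ)⁻¹ : ℝ) : ℂ) • (1 : Matrix (Fin n) (Fin n) ℂ)).IsHermitian := by
    simp [IsHermitian, conjTranspose_smul]
  rw [← h, vnEntropy, dif_pos hH]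
  simp only [IsHermitian.eigenvalues_ofReal_smul_one, Finset.sum_const, Finset.card_univ,
    Fintype.card_fin, nsmul_eq_mul, logb_inv]
  field_simp

lemma IsState.sum_eigenvalues {ρ : Matrix (Fin n) (Fin n) ℂ} (hρ : IsState ρ) :
    ∑ i, hρ.1.1.eigenvalues i = 1 := by
  have h : ((∑ i, hρ.1.1.eigenvalues i : ℝ) : ℂ) = 1 := by
    rw [Complex.ofReal_sum]
    exact hρ.1.1.trace_eq_sum_eigenvalues.symm.trans hρ.2
  exact_mod_cast h

lemma IsState.vnEntropy_le_logb_card {ρ : Matrix (Fin n) (Fin n) ℂ} (hρ : IsState ρ) :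
    vnEntropy ρ ≤ logb 2 n := by
  have hn : 0 < n := by
    by_contra! h
    obtain rfl : n = 0 := by omega
    simpa using hρ.2
  have hn' : (0 : ℝ) < n := by exact_mod_cast hn
  have jensen := concaveOn_negMulLog.le_map_sum (t := Finset.univ) (w := fun _ => (n : ℝ)⁻¹)
    (p := hρ.1.1.eigenvalues) (fun _ _ => by positivity) (by simp [hn'.ne'])
    (fun i _ => hρ.1.eigenvalues_nonneg i)
  have hrhs : negMulLog (n : ℝ)⁻¹ = (n : ℝ)⁻¹ * log n := by simp [negMulLog, log_inv]
  simp only [smul_eq_mul, ← Finset.mul_sum, hρ.sum_eigenvalues, mul_one, hrhs,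
    mul_le_mul_iff_right₀ (inv_pos.mpr hn')] at jensen
  rw [vnEntropy_eq_sum_negMulLog hρ.1.1, logb]
  gcongr

lemma IsState.unitary_conj {ρ U : Matrix (Fin n) (Fin n) ℂ} (hρ : IsState ρ)
    (hU : U ∈ unitaryGroup (Fin n) ℂ) : IsState (U * ρ * Uᴴ) := by
  have hUU : Uᴴ * U = 1 := mem_unitaryGroup_iff'.mp hU
  refine ⟨hρ.1.mul_mul_conjTranspose_same U, ?_⟩
  rw [trace_mul_cycle, hUU, Matrix.one_mul, hρ.2]

end Entropy

section PartialTrace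

lemma trace_ptraceB (ρ : Matrix (Fin 4) (Fin 4) ℂ) : (ptraceB ρ).trace = ρ.trace := by
  simp [trace, ptraceB, Fin.sum_univ_two, Fin.sum_univ_four]
  ring

lemma isHermitian_ptraceB {ρ : Matrix (Fin 4) (Fin 4) ℂ} (hρ : ρ.IsHermitian) :
    (ptraceB ρ).IsHermitian := by
  ext i j
  simp only [conjTranspose_apply, ptraceB, of_apply, star_sum]
  exact Finset.sum_congr rfl fun k _ => hρ.apply _ _

lemma dotProduct_ptraceB_mulVec (ρ : Matrix (Fin 4) (Fin 4) ℂ) (x : Fin 2 → ℂ) :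
    star x ⬝ᵥ (ptraceB ρ *ᵥ x) =
      star ![x 0, 0, x 1, 0] ⬝ᵥ (ρ *ᵥ ![x 0, 0, x 1, 0]) +
        star ![0, x 0, 0, x 1] ⬝ᵥ (ρ *ᵥ ![0, x 0, 0, x 1]) := by
  simp [dotProduct, mulVec, ptraceB, Fin.sum_univ_two, Fin.sum_univ_four]
  ring

lemma IsState.ptraceB {ρ : Matrix (Fin 4) (Fin 4) ℂ} (hρ : IsState ρ) : IsState (ptraceB ρ) := by
  refine ⟨.of_dotProduct_mulVec_nonneg (isHermitian_ptraceB hρ.1.1) fun x => ?_,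
    by rw [trace_ptraceB, hρ.2]⟩
  rw [dotProduct_ptraceB_mulVec]
  exact add_nonneg (hρ.1.dotProduct_mulVec_nonneg _) (hρ.1.dotProduct_mulVec_nonneg _)

end PartialTrace

section Bell

def bellUnitary : Matrix (Fin 4) (Fin 4) ℂ := (Matrix.of bell)ᵀ

private lemma inv_sqrt_two_sq : ((√2 : ℝ) : ℂ)⁻¹ ^ 2 = 2⁻¹ := by
  rw [inv_pow, ← Complex.ofReal_pow, Real.sq_sqrt zero_le_two]
  norm_num

lemma bellUnitary_mem_unitaryGroup : bellUnitary ∈ unitaryGroup (Fin 4) ℂ := by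
  rw [mem_unitaryGroup_iff]
  ext i j
  fin_cases i <;> fin_cases j <;>
    simp [bellUnitary, bell, mul_apply, Fin.sum_univ_four, one_apply] <;>
    ring_nf <;> norm_num [← Complex.ofReal_pow]

lemma ptraceB_bellUnitary_diagonal (d : Fin 4 → ℂ) (hd : ∑ m, d m = 1) :
    ptraceB (bellUnitary * diagonal d * bellUnitaryᴴ) = (2 : ℂ)⁻¹ • 1 := by
  rw [Fin.sum_univ_four] at hd
  have hs := inv_sqrt_two_sq
  ext i j
  fin_cases i <;> fin_cases j <;>
    simp [ptraceB, bellUnitary, bell, mul_apply, Fin.sum_univ_four, Fin.sum_univ_two,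
      diagonal, one_apply] <;>
    linear_combination (d 0 + d 1 + d 2 + d 3) * hs + 2⁻¹ * hd

lemma exists_unitary_ptraceB_eq_half_smul_one {σ : Matrix (Fin 4) (Fin 4) ℂ} (hσ : IsState σ) :
    ∃ U ∈ unitaryGroup (Fin 4) ℂ, ptraceB (U * σ * Uᴴ) = (2 : ℂ)⁻¹ • 1 := by
  set V := hσ.1.1.eigenvectorUnitary
  refine ⟨bellUnitary * star (V : Matrix (Fin 4) (Fin 4) ℂ),
    mul_mem bellUnitary_mem_unitaryGroup (star V).2, ?_⟩
  have hdiag := hσ.1.1.conjStarAlgAut_star_eigenvectorUnitary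
  rw [Unitary.conjStarAlgAut_star_apply] at hdiag
  have hconj : bellUnitary * star (V : Matrix (Fin 4) (Fin 4) ℂ) * σ *
      (bellUnitary * star (V : Matrix (Fin 4) (Fin 4) ℂ))ᴴ =
      bellUnitary * (star (V : Matrix (Fin 4) (Fin 4) ℂ) * σ * V) * bellUnitaryᴴ := by
    simp only [conjTranspose_mul, star_eq_conjTranspose, conjTranspose_conjTranspose,
      Matrix.mul_assoc]
  rw [hconj, hdiag]
  refine ptraceB_bellUnitary_diagonal _ ?_
  simpa using congrArg Complex.ofReal hσ.sum_eigenvalues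

end Bell

/-- A two-qubit state `σ` belongs to ACVENN (the conditional von Neumann
entropy of `UσU†` is non-negative for every 4×4 unitary `U`) iff `S(σ) ≥ 1`. -/
theorem stmt_0 (σ : Matrix (Fin 4) (Fin 4) ℂ) (hσ : IsState σ) :
    (∀ U ∈ Matrix.unitaryGroup (Fin 4) ℂ, 0 ≤ condEntropy (U * σ * Uᴴ)) ↔
      1 ≤ vnEntropy σ := by
  have hS2 : logb 2 (2 : ℕ) = 1 := by simp
  have hmixed : vnEntropy ((2 : ℂ)⁻¹ • (1 : Matrix (Fin 2) (Fin 2) ℂ)) = 1 := by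
    simpa [hS2] using vnEntropy_maximallyMixed (n := 2) two_pos
  constructor
  · intro hcond
    obtain ⟨U, hU, hmarg⟩ := exists_unitary_ptraceB_eq_half_smul_one hσ
    have := hcond U hU
    rw [condEntropy, vnEntropy_unitary_conj hσ.1.1 hU, hmarg, hmixed] at this
    linarith
  · intro hS U hU
    have := ((hσ.unitary_conj hU).ptraceB).vnEntropy_le_logb_card
    rw [hS2] at this
    rw [condEntropy, vnEntropy_unitary_conj hσ.1.1 hU]
    linarith
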